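/- arXiv:q-bio/0501016 — 8 statements merged into one kernel-verified Lean document; each statement's English description precedes it below -/
import Mathlib

section
/- Every mass-maintaining set of molecules is self-maintaining. Consequently, every organization is a semi-organization. -/
/-- A set `C` is closed: products of reactions whose reactants all lie in `C` lie in `C`. -/
def Closed {ι ρ : Type*} (re : ρ → Multiset ι × Multiset ι) (C : Set ι) : Prop :=
  ∀ r : ρ, (∀ a ∈ (re r).1, a ∈ C) → ∀ b ∈ (re r).2, b ∈ C

/-- Molecule `k` is produced within `C`. -/
def Produced {ι ρ : Type*} [DecidableEq ι] (re : ρ → Multiset ι × Multiset ι)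
    (C : Set ι) (k : ι) : Prop :=
  ∃ r : ρ, (∀ a ∈ (re r).1, a ∈ C) ∧ (re r).1.count k < (re r).2.count k

/-- Molecule `k` is used-up within `C`. -/
def UsedUp {ι ρ : Type*} [DecidableEq ι] (re : ρ → Multiset ι × Multiset ι)
    (C : Set ι) (k : ι) : Prop :=
  ∃ r : ρ, (∀ a ∈ (re r).1, a ∈ C) ∧ (re r).2.count k < (re r).1.count k

/-- `S` is self-maintaining. -/
def SelfMaintaining {ι ρ : Type*} [DecidableEq ι] (re : ρ → Multiset ι × Multiset ι)
    (S : Set ι) : Prop :=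
  ∀ k ∈ S, UsedUp re S k → Produced re S k

/-- A semi-organization is closed and self-maintaining. -/
def SemiOrganization {ι ρ : Type*} [DecidableEq ι] (re : ρ → Multiset ι × Multiset ι)
    (S : Set ι) : Prop :=
  Closed re S ∧ SelfMaintaining re S

/-- Entry of the stoichiometric matrix: products minus reactants multiplicity. -/
noncomputable def stoich {ι ρ : Type*} [DecidableEq ι] (re : ρ → Multiset ι × Multiset ι)
    (i : ι) (r : ρ) : ℝ :=
  ((re r).2.count i : ℝ) - ((re r).1.count i : ℝ)

/-- `C` is mass-maintaining. -/
def MassMaintaining {ι ρ : Type*} [DecidableEq ι] [Fintype ρ]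
    (re : ρ → Multiset ι × Multiset ι) (C : Set ι) : Prop :=
  ∃ v : ρ → ℝ,
    (∀ r : ρ, (∀ a ∈ (re r).1, a ∈ C) → 0 < v r) ∧
    (∀ r : ρ, ¬ (∀ a ∈ (re r).1, a ∈ C) → v r = 0) ∧
    (∀ i ∈ C, 0 ≤ ∑ r : ρ, stoich re i r * v r)

/-- An organization is closed and mass-maintaining. -/
def Organization {ι ρ : Type*} [DecidableEq ι] [Fintype ρ]
    (re : ρ → Multiset ι × Multiset ι) (O : Set ι) : Prop :=
  Closed re O ∧ MassMaintaining re O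

/-- The closure of `S`: the smallest closed set containing `S`. -/
def GCL {ι ρ : Type*} (re : ρ → Multiset ι × Multiset ι) (S : Set ι) : Set ι :=
  ⋂₀ {C : Set ι | Closed re C ∧ S ⊆ C}

/-- A catalytic flow system: every molecule has a dilution reaction `{k} → ∅`,
and no molecule is used-up by any other reaction. -/
def CatalyticFlow {ι ρ : Type*} [DecidableEq ι] (re : ρ → Multiset ι × Multiset ι) : Prop :=
  (∀ k : ι, ∃ r : ρ, re r = ({k}, (0 : Multiset ι))) ∧
  (∀ r : ρ, (¬ ∃ k : ι, re r = ({k}, (0 : Multiset ι))) →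
    ∀ k : ι, (re r).1.count k ≤ (re r).2.count k)

/-- A consistent reaction system with persistent molecules `P`. -/
def Consistent {ι ρ : Type*} [DecidableEq ι] (re : ρ → Multiset ι × Multiset ι)
    (P : Set ι) : Prop :=
  (∀ k : ι, k ∉ P → ∃ r : ρ, (re r).1 = {k} ∧ k ∉ (re r).2) ∧
  (∀ r : ρ, ∀ p ∈ P, (re r).1.count p ≤ (re r).2.count p)

/-- `S` is the largest self-maintaining subset of `C`. -/
def IsGSM {ι ρ : Type*} [DecidableEq ι] (re : ρ → Multiset ι × Multiset ι)
    (C S : Set ι) : Prop :=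
  S ⊆ C ∧ SelfMaintaining re S ∧ ∀ T : Set ι, T ⊆ C → SelfMaintaining re T → T ⊆ S

/-- `S` is the largest mass-maintaining subset of `C`. -/
def IsGMM {ι ρ : Type*} [DecidableEq ι] [Fintype ρ] (re : ρ → Multiset ι × Multiset ι)
    (C S : Set ι) : Prop :=
  S ⊆ C ∧ MassMaintaining re S ∧ ∀ T : Set ι, T ⊆ C → MassMaintaining re T → T ⊆ S

/-- An admissible flux function w.r.t. threshold `Φ`: nonnegative, and positive
exactly when all reactants are present (above threshold). -/
def Admissible {ι ρ : Type*} (re : ρ → Multiset ι × Multiset ι) (Φ : ℝ)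
    (v : (ι → ℝ) → ρ → ℝ) : Prop :=
  ∀ x : ι → ℝ, ∀ r : ρ, 0 ≤ v x r ∧ (0 < v x r ↔ ∀ a ∈ (re r).1, x a > Φ)

/-- every mass-maintaining set is self-maintaining; consequently,
every organization is a semi-organization. -/
theorem stmt0 {ι ρ : Type*} [Fintype ι] [Fintype ρ] [DecidableEq ι]
    (re : ρ → Multiset ι × Multiset ι) :
    (∀ C : Set ι, MassMaintaining re C → SelfMaintaining re C) ∧
    (∀ O : Set ι, Organization re O → SemiOrganization re O) := by
  have main : ∀ C : Set ι, MassMaintaining re C → SelfMaintaining re C := by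
    intro C hC k hk hused
    obtain ⟨v, hpos, hzero, hsum⟩ := hC
    obtain ⟨r0, hr0C, hr0⟩ := hused
    by_contra hnp
    have hall : ∀ r : ρ, stoich re k r * v r ≤ 0 := by
      intro r
      by_cases hrC : ∀ a ∈ (re r).1, a ∈ C
      · have hv := hpos r hrC
        have : stoich re k r ≤ 0 := by
          unfold stoich
          by_contra h
          push_neg at h
          have h2 : ((re r).1.count k : ℝ) < ((re r).2.count k : ℝ) := by linarith
          have : (re r).1.count k < (re r).2.count k := by exact_mod_cast h2
          exact hnp ⟨r, hrC, this⟩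
        exact mul_nonpos_of_nonpos_of_nonneg this hv.le
      · simp [hzero r hrC]
    have hneg : stoich re k r0 * v r0 < 0 := by
      have hs : stoich re k r0 < 0 := by
        unfold stoich
        have : ((re r0).2.count k : ℝ) < ((re r0).1.count k : ℝ) := by exact_mod_cast hr0
        linarith
      exact mul_neg_of_neg_of_pos hs (hpos r0 hr0C)
    have : ∑ r : ρ, stoich re k r * v r < 0 := by
      calc ∑ r : ρ, stoich re k r * v r < ∑ _r : ρ, (0:ℝ) :=
        Finset.sum_lt_sum (fun i _ => hall i) ⟨r0, Finset.mem_univ r0, hneg⟩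
      _ = 0 := by simp
    exact absurd (hsum k hk) (not_le.mpr this)
  exact ⟨main, fun O hO => ⟨hO.1, main O hO.2⟩⟩
end

section
/- In a catalytic flow system, every semi-organization is an organization; that is, every closed and self-maintaining set of molecules is mass-maintaining. -/
/-!
Give every enabled non-dilution reaction flux `1` and every enabled dilution reaction a small
flux `ε`. Non-dilution reactions never consume anything, and a dilution reaction removes at most
one copy of a molecule, so each reaction changes the amount of `i` by at least `-ε`. A molecule
`i` of a self-maintaining set is used up by its own dilution reaction, hence produced by some
enabled reaction, which cannot be a dilution reaction and so adds at least `1`. With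
`ε = 1 / (|R| + 1)` the net change of `i` is nonnegative.
-/

open Finset

section Flux

variable {ι ρ : Type*}

theorem Finset.sum_nonneg_of_one_le_of_forall_neg_le [Fintype ρ] {f : ρ → ℝ} {ε : ℝ}
    (hε : 0 ≤ ε) (hcard : Fintype.card ρ * ε ≤ 1) {r₀ : ρ} (h₀ : 1 ≤ f r₀)
    (hf : ∀ r, -ε ≤ f r) : 0 ≤ ∑ r, f r := by
  have hshift : f r₀ + ε ≤ ∑ r, (f r + ε) :=
    single_le_sum (f := fun r => f r + ε) (fun r _ => by linarith [hf r]) (mem_univ r₀)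
  rw [sum_add_distrib, sum_const, card_univ, nsmul_eq_mul] at hshift
  linarith

def IsDilution (re : ρ → Multiset ι × Multiset ι) (r : ρ) : Prop :=
  ∃ k, re r = ({k}, 0)

def Enabled (re : ρ → Multiset ι × Multiset ι) (C : Set ι) (r : ρ) : Prop :=
  ∀ a ∈ (re r).1, a ∈ C

section Stoich

variable [DecidableEq ι] {re : ρ → Multiset ι × Multiset ι} {r : ρ} {i : ι}

theorem neg_one_le_stoich_of_isDilution (hr : IsDilution re r) : -1 ≤ stoich re i r := by
  obtain ⟨k, hk⟩ := hr
  have hcount : (({k} : Multiset ι).count i : ℝ) ≤ 1 := by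
    rw [Multiset.count_singleton]
    split_ifs <;> simp
  simp only [stoich, hk, Multiset.count_zero, Nat.cast_zero, zero_sub]
  linarith

theorem not_isDilution_of_count_lt (hr : (re r).1.count i < (re r).2.count i) :
    ¬ IsDilution re r := by
  rintro ⟨k, hk⟩
  simp [hk] at hr

theorem CatalyticFlow.stoich_nonneg (h : CatalyticFlow re) (hr : ¬ IsDilution re r) :
    0 ≤ stoich re i r := by
  have : ((re r).1.count i : ℝ) ≤ (re r).2.count i := by exact_mod_cast h.2 r hr i
  simp only [stoich]
  linarith

theorem CatalyticFlow.usedUp {C : Set ι} (h : CatalyticFlow re) (hi : i ∈ C) :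
    UsedUp re C i := by
  obtain ⟨r, hr⟩ := h.1 i
  refine ⟨r, fun a ha => ?_, by simp [hr]⟩
  rw [hr, Multiset.mem_singleton] at ha
  rwa [ha]

end Stoich

open Classical in
noncomputable def dilutionFlux (re : ρ → Multiset ι × Multiset ι) (C : Set ι) (ε : ℝ) (r : ρ) :
    ℝ :=
  if Enabled re C r then (if IsDilution re r then ε else 1) else 0

section DilutionFlux

variable {re : ρ → Multiset ι × Multiset ι} {C : Set ι} {ε : ℝ} {r : ρ}

theorem dilutionFlux_pos (hε : 0 < ε) (hr : Enabled re C r) : 0 < dilutionFlux re C ε r := by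
  unfold dilutionFlux
  split_ifs <;> simp [hε]

theorem dilutionFlux_of_not_enabled (hr : ¬ Enabled re C r) : dilutionFlux re C ε r = 0 := by
  simp [dilutionFlux, hr]

variable [DecidableEq ι] {i : ι}

theorem CatalyticFlow.neg_le_stoich_mul_dilutionFlux (h : CatalyticFlow re) (hε : 0 ≤ ε) :
    -ε ≤ stoich re i r * dilutionFlux re C ε r := by
  unfold dilutionFlux
  split_ifs with hen hdil
  · nlinarith [neg_one_le_stoich_of_isDilution (i := i) hdil]
  · linarith [h.stoich_nonneg (i := i) hdil]
  · simpa using hε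

theorem one_le_stoich_mul_dilutionFlux (hr : Enabled re C r)
    (hcount : (re r).1.count i < (re r).2.count i) :
    1 ≤ stoich re i r * dilutionFlux re C ε r := by
  have hgain : ((re r).1.count i : ℝ) + 1 ≤ (re r).2.count i := by exact_mod_cast hcount
  simp only [dilutionFlux, if_pos hr, if_neg (not_isDilution_of_count_lt hcount), stoich]
  linarith

end DilutionFlux

theorem CatalyticFlow.massMaintaining [DecidableEq ι] [Fintype ρ]
    {re : ρ → Multiset ι × Multiset ι} (h : CatalyticFlow re) {O : Set ι}
    (hO : SelfMaintaining re O) : MassMaintaining re O := by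
  set ε : ℝ := 1 / (Fintype.card ρ + 1)
  have hε : 0 < ε := by positivity
  have hcard : Fintype.card ρ * ε ≤ 1 := by
    rw [mul_one_div, div_le_one (by positivity)]
    linarith
  refine ⟨dilutionFlux re O ε, fun r => dilutionFlux_pos hε,
    fun r => dilutionFlux_of_not_enabled, fun i hi => ?_⟩
  obtain ⟨r₀, hr₀, hcount⟩ := hO i hi (h.usedUp hi)
  exact sum_nonneg_of_one_le_of_forall_neg_le hε.le hcard
    (one_le_stoich_mul_dilutionFlux hr₀ hcount)
    (fun r => h.neg_le_stoich_mul_dilutionFlux hε.le)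

end Flux

theorem stmt3_general {ι ρ : Type*} [Fintype ρ] [DecidableEq ι]
    (re : ρ → Multiset ι × Multiset ι) (h : CatalyticFlow re)
    (O : Set ι) (hO : SemiOrganization re O) :
    MassMaintaining re O ∧ Organization re O :=
  have hmass := h.massMaintaining hO.2
  ⟨hmass, hO.1, hmass⟩

/-- in a catalytic flow system, every semi-organization (closed and
self-maintaining set) is mass-maintaining, hence an organization. -/
theorem stmt3 {ι ρ : Type*} [Fintype ι] [Fintype ρ] [DecidableEq ι]
    (re : ρ → Multiset ι × Multiset ι) (h : CatalyticFlow re)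
    (O : Set ι) (hO : SemiOrganization re O) :
    MassMaintaining re O ∧ Organization re O :=
  stmt3_general re h O hO
end

section
/- In a consistent reaction system, every set of molecules C ⊆ M contains a unique largest self-maintaining subset GSM(C); i.e., there is a self-maintaining subset of C that contains every self-maintaining subset of C. -/
/-! In a consistent reaction system a molecule that is used-up anywhere is non-persistent, so its
first-order decay reaction uses it up within every set containing it. Hence the union of
self-maintaining sets is self-maintaining: a molecule used-up within the union is used-up within
a member containing it, hence produced there, hence produced within the union. The union of all
self-maintaining subsets of `C` is therefore the greatest one. -/

section

variable {ι ρ : Type*} [DecidableEq ι] {re : ρ → Multiset ι × Multiset ι}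

theorem Produced.mono {S T : Set ι} {k : ι} (hST : S ⊆ T) (hk : Produced re S k) :
    Produced re T k :=
  let ⟨r, hr, hlt⟩ := hk
  ⟨r, fun a ha => hST (hr a ha), hlt⟩

theorem Consistent.notMem_of_usedUp {P S : Set ι} {k : ι} (h : Consistent re P)
    (hk : UsedUp re S k) : k ∉ P := by
  obtain ⟨r, -, hlt⟩ := hk
  exact fun hkP => (h.2 r k hkP).not_gt hlt

theorem Consistent.usedUp_of_notMem {P T : Set ι} {k : ι} (h : Consistent re P) (hkP : k ∉ P)
    (hkT : k ∈ T) : UsedUp re T k := by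
  obtain ⟨r, hr, hkr⟩ := h.1 k hkP
  refine ⟨r, fun a ha => ?_, ?_⟩
  · rw [hr, Multiset.mem_singleton] at ha
    exact ha ▸ hkT
  · rw [hr, Multiset.count_singleton_self, Multiset.count_eq_zero.mpr hkr]
    exact Nat.zero_lt_one

theorem Consistent.selfMaintaining_sUnion {P : Set ι} (h : Consistent re P) {𝒯 : Set (Set ι)}
    (h𝒯 : ∀ T ∈ 𝒯, SelfMaintaining re T) : SelfMaintaining re (⋃₀ 𝒯) := by
  rintro k ⟨T, hT, hkT⟩ hused
  have husedT : UsedUp re T k := h.usedUp_of_notMem (h.notMem_of_usedUp hused) hkT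
  exact (h𝒯 T hT k hkT husedT).mono (Set.subset_sUnion_of_mem hT)

theorem Consistent.isGreatest_sUnion_selfMaintaining {P : Set ι} (h : Consistent re P)
    (C : Set ι) :
    IsGreatest {T | T ⊆ C ∧ SelfMaintaining re T} (⋃₀ {T | T ⊆ C ∧ SelfMaintaining re T}) :=
  ⟨⟨Set.sUnion_subset fun _ hT => hT.1, h.selfMaintaining_sUnion fun _ hT => hT.2⟩,
    fun _ hT => Set.subset_sUnion_of_mem hT⟩

end

theorem stmt4_general {ι ρ : Type*} [DecidableEq ι]
    (re : ρ → Multiset ι × Multiset ι) (P : Set ι) (h : Consistent re P)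
    (C : Set ι) :
    ∃! S : Set ι, S ⊆ C ∧ SelfMaintaining re S ∧
      ∀ T : Set ι, T ⊆ C → SelfMaintaining re T → T ⊆ S := by
  have hG := h.isGreatest_sUnion_selfMaintaining C
  refine ⟨_, ⟨hG.1.1, hG.1.2, fun T hTC hT => hG.2 ⟨hTC, hT⟩⟩, fun S ⟨hSC, hS, hSmax⟩ => ?_⟩
  have hSgreatest : IsGreatest {T | T ⊆ C ∧ SelfMaintaining re T} S :=
    ⟨⟨hSC, hS⟩, fun T hT => hSmax T hT.1 hT.2⟩
  exact hSgreatest.unique hG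

/-- in a consistent reaction system, every set `C` contains a unique
largest self-maintaining subset. -/
theorem stmt4 {ι ρ : Type*} [Fintype ι] [Fintype ρ] [DecidableEq ι]
    (re : ρ → Multiset ι × Multiset ι) (P : Set ι) (h : Consistent re P)
    (C : Set ι) :
    ∃! S : Set ι, S ⊆ C ∧ SelfMaintaining re S ∧
      ∀ T : Set ι, T ⊆ C → SelfMaintaining re T → T ⊆ S :=
  stmt4_general re P h C
end

section
/- In a consistent reaction system, for every set S ⊆ M, the largest mass-maintaining subset of the largest self-maintaining subset of S equals the largest mass-maintaining subset of S; that is, GMM(GSM(S)) = GMM(S). -/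
lemma mm_sm {ι ρ : Type*} [Fintype ρ] [DecidableEq ι]
    (re : ρ → Multiset ι × Multiset ι) (C : Set ι)
    (hC : MassMaintaining re C) : SelfMaintaining re C := by
  obtain ⟨v, hpos, hzero, hsum⟩ := hC
  intro k hk ⟨r0, hr0C, hr0lt⟩
  by_contra hnp
  unfold Produced at hnp
  push_neg at hnp
  have hsum' := hsum k hk
  have : ∑ r : ρ, stoich re k r * v r < ∑ r : ρ, (0 : ℝ) := by
    apply Finset.sum_lt_sum
    · intro r _
      by_cases hr : ∀ a ∈ (re r).1, a ∈ C
      · have h1 : stoich re k r ≤ 0 := by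
          have := hnp r hr
          unfold stoich
          have : ((re r).2.count k : ℝ) ≤ ((re r).1.count k : ℝ) := by exact_mod_cast this
          linarith
        have h2 : 0 < v r := hpos r hr
        nlinarith
      · simp [hzero r hr]
    · refine ⟨r0, Finset.mem_univ _, ?_⟩
      have h1 : stoich re k r0 < 0 := by
        unfold stoich
        have : ((re r0).2.count k : ℝ) < ((re r0).1.count k : ℝ) := by exact_mod_cast hr0lt
        linarith
      have h2 : 0 < v r0 := hpos r0 hr0C
      nlinarith
  simp only [Finset.sum_const_zero] at this
  linarith

/-- in a consistent reaction system, `GMM (GSM S) = GMM S`: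
the largest mass-maintaining subset of the largest self-maintaining subset of
`S` equals the largest mass-maintaining subset of `S`. -/
theorem stmt9 {ι ρ : Type*} [Fintype ι] [Fintype ρ] [DecidableEq ι]
    (re : ρ → Multiset ι × Multiset ι) (P : Set ι) (h : Consistent re P)
    (S S₁ T₁ T₂ : Set ι)
    (hGSM : IsGSM re S S₁) (hGMM₁ : IsGMM re S₁ T₁) (hGMM₂ : IsGMM re S T₂) :
    T₁ = T₂ := by
  obtain ⟨hS₁S, hS₁sm, hS₁max⟩ := hGSM
  obtain ⟨hT₁S₁, hT₁mm, hT₁max⟩ := hGMM₁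
  obtain ⟨hT₂S, hT₂mm, hT₂max⟩ := hGMM₂
  apply Set.Subset.antisymm
  · exact hT₂max T₁ (hT₁S₁.trans hS₁S) hT₁mm
  · exact hT₁max T₂ (hS₁max T₂ hT₂S (mm_sm re T₂ hT₂mm)) hT₂mm
end

section
/- Consider a general reaction system with algebraic chemistry ⟨M,R⟩, stoichiometric matrix N, and an admissible flux function v with respect to a threshold Φ ≥ 0. If x' is a fixed point (N v(x') = 0, x' ≥ 0) and Φ is smaller than every positive coordinate of x', then the abstraction φ(x') = { i ∈ M : x'_i > Φ } is a closed set. -/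
theorem stoich_nonneg_of_notMem {ι ρ : Type*} [DecidableEq ι]
    {re : ρ → Multiset ι × Multiset ι} {i : ι} {r : ρ} (hi : i ∉ (re r).1) :
    0 ≤ stoich re i r := by
  simp [stoich, Multiset.count_eq_zero_of_notMem hi]

theorem stoich_pos_of_notMem_of_mem {ι ρ : Type*} [DecidableEq ι]
    {re : ρ → Multiset ι × Multiset ι} {i : ι} {r : ρ} (hi : i ∉ (re r).1)
    (hi' : i ∈ (re r).2) : 0 < stoich re i r := by
  simpa [stoich, Multiset.count_eq_zero_of_notMem hi] using Multiset.count_pos.mpr hi'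

/-- No reaction with positive flux consumes a molecule outside `C`, so every term of its net
production is nonnegative, and a reaction enabled by `C` that produces it makes the sum positive. -/
theorem closed_of_net_production_nonpos {ι ρ : Type*} [DecidableEq ι] [Fintype ρ]
    (re : ρ → Multiset ι × Multiset ι) (C : Set ι) (w : ρ → ℝ) (hw_nonneg : ∀ r, 0 ≤ w r)
    (hw_pos : ∀ r, 0 < w r ↔ ∀ a ∈ (re r).1, a ∈ C)
    (hbal : ∀ i ∉ C, ∑ r, stoich re i r * w r ≤ 0) :
    Closed re C := by
  intro r hr b hb
  by_contra hbC
  have hnot_reactant : ∀ r', 0 < w r' → b ∉ (re r').1 :=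
    fun r' hr' hmem => hbC ((hw_pos r').1 hr' b hmem)
  have hterm_nonneg : ∀ r', 0 ≤ stoich re b r' * w r' := by
    intro r'
    rcases (hw_nonneg r').eq_or_lt with h | h
    · simp [← h]
    · exact mul_nonneg (stoich_nonneg_of_notMem (hnot_reactant r' h)) h.le
  have hwr : 0 < w r := (hw_pos r).2 hr
  have hterm_pos : 0 < stoich re b r * w r :=
    mul_pos (stoich_pos_of_notMem_of_mem (hnot_reactant r hwr) hb) hwr
  have hsum_pos : 0 < ∑ r', stoich re b r' * w r' :=
    Finset.sum_pos' (fun r' _ => hterm_nonneg r') ⟨r, Finset.mem_univ r, hterm_pos⟩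
  linarith [hbal b hbC]

theorem stmt13_general {ι ρ : Type*} [Fintype ρ] [DecidableEq ι]
    (re : ρ → Multiset ι × Multiset ι) (Φ : ℝ)
    (v : (ι → ℝ) → ρ → ℝ) (hv : Admissible re Φ v)
    (x' : ι → ℝ)
    (hfix : ∀ i : ι, ∑ r : ρ, stoich re i r * v x' r = 0) :
    Closed re {i : ι | Φ < x' i} :=
  closed_of_net_production_nonpos re _ (v x') (fun r => (hv x' r).1) (fun r => (hv x' r).2)
    (fun i _ => (hfix i).le)

/-- at a fixed point of the dynamics, the abstraction
`φ(x') = {i | x'_i > Φ}` is a closed set. -/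
theorem stmt13 {ι ρ : Type*} [Fintype ι] [Fintype ρ] [DecidableEq ι]
    (re : ρ → Multiset ι × Multiset ι) (Φ : ℝ) (hΦ : 0 ≤ Φ)
    (v : (ι → ℝ) → ρ → ℝ) (hv : Admissible re Φ v)
    (x' : ι → ℝ) (hx : ∀ i : ι, 0 ≤ x' i)
    (hfix : ∀ i : ι, ∑ r : ρ, stoich re i r * v x' r = 0)
    (hthr : ∀ i : ι, 0 < x' i → Φ < x' i) :
    Closed re {i : ι | Φ < x' i} :=
  stmt13_general re Φ v hv x' hfix
end

section
/- Consider a general reaction system with algebraic chemistry ⟨M,R⟩, stoichiometric matrix N, and an admissible flux function v with respect to a threshold Φ ≥ 0. If x' is a fixed point (N v(x') = 0, x' ≥ 0) and Φ is smaller than every positive coordinate of x', then the abstraction φ(x') = { i ∈ M : x'_i > Φ } is a mass-maintaining set, witnessed by the flux vector v(x'). -/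
namespace Admissible

variable {ι ρ : Type*} {re : ρ → Multiset ι × Multiset ι} {Φ : ℝ} {v : (ι → ℝ) → ρ → ℝ}

theorem flux_pos (hv : Admissible re Φ v) {x : ι → ℝ} {r : ρ}
    (hr : ∀ a ∈ (re r).1, a ∈ {i | Φ < x i}) : 0 < v x r :=
  (hv x r).2.mpr hr

theorem flux_eq_zero (hv : Admissible re Φ v) {x : ι → ℝ} {r : ρ}
    (hr : ¬ ∀ a ∈ (re r).1, a ∈ {i | Φ < x i}) : v x r = 0 :=
  (((hv x r).1.lt_or_eq).resolve_left fun hpos => hr ((hv x r).2.mp hpos)).symm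

theorem massMaintaining_of_netProduction_nonneg [DecidableEq ι] [Fintype ρ]
    (hv : Admissible re Φ v) {x : ι → ℝ}
    (hnet : ∀ i ∈ {i | Φ < x i}, 0 ≤ ∑ r : ρ, stoich re i r * v x r) :
    MassMaintaining re {i | Φ < x i} :=
  ⟨v x, fun _ => hv.flux_pos, fun _ => hv.flux_eq_zero, hnet⟩

end Admissible

theorem stmt14_general {ι ρ : Type*} [Fintype ρ] [DecidableEq ι]
    (re : ρ → Multiset ι × Multiset ι) (Φ : ℝ)
    (v : (ι → ℝ) → ρ → ℝ) (hv : Admissible re Φ v)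
    (x' : ι → ℝ)
    (hfix : ∀ i : ι, ∑ r : ρ, stoich re i r * v x' r = 0) :
    MassMaintaining re {i : ι | Φ < x' i} ∧
    (∀ r : ρ, (∀ a ∈ (re r).1, a ∈ {i : ι | Φ < x' i}) → 0 < v x' r) ∧
    (∀ r : ρ, ¬ (∀ a ∈ (re r).1, a ∈ {i : ι | Φ < x' i}) → v x' r = 0) ∧
    (∀ i ∈ {i : ι | Φ < x' i}, 0 ≤ ∑ r : ρ, stoich re i r * v x' r) := by
  have hnet : ∀ i ∈ {i : ι | Φ < x' i}, 0 ≤ ∑ r : ρ, stoich re i r * v x' r :=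
    fun i _ => (hfix i).ge
  exact ⟨hv.massMaintaining_of_netProduction_nonneg hnet,
    fun _ => hv.flux_pos, fun _ => hv.flux_eq_zero, hnet⟩

/-- at a fixed point of the dynamics, the abstraction
`φ(x') = {i | x'_i > Φ}` is mass-maintaining, witnessed by the flux vector
`v x'`. -/
theorem stmt14 {ι ρ : Type*} [Fintype ι] [Fintype ρ] [DecidableEq ι]
    (re : ρ → Multiset ι × Multiset ι) (Φ : ℝ) (hΦ : 0 ≤ Φ)
    (v : (ι → ℝ) → ρ → ℝ) (hv : Admissible re Φ v)
    (x' : ι → ℝ) (hx : ∀ i : ι, 0 ≤ x' i)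
    (hfix : ∀ i : ι, ∑ r : ρ, stoich re i r * v x' r = 0)
    (hthr : ∀ i : ι, 0 < x' i → Φ < x' i) :
    MassMaintaining re {i : ι | Φ < x' i} ∧
    (∀ r : ρ, (∀ a ∈ (re r).1, a ∈ {i : ι | Φ < x' i}) → 0 < v x' r) ∧
    (∀ r : ρ, ¬ (∀ a ∈ (re r).1, a ∈ {i : ι | Φ < x' i}) → v x' r = 0) ∧
    (∀ i ∈ {i : ι | Φ < x' i}, 0 ≤ ∑ r : ρ, stoich re i r * v x' r) :=
  stmt14_general re Φ v hv x' hfix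
end

section
/- Consider a general reaction system with algebraic chemistry ⟨M,R⟩, stoichiometric matrix N, and an admissible flux function v with respect to a threshold Φ ≥ 0. If x' is a fixed point (N v(x') = 0, x' ≥ 0) and Φ is smaller than every positive coordinate of x', then the abstraction φ(x') = { i ∈ M : x'_i > Φ } is an organization, i.e., it is both closed and mass-maintaining. -/
/-! At a fixed point the flux `v x'` is positive exactly on the reactions whose reactants all lie
in `C = φ(x')`. A molecule `b ∉ C` is then a reactant of no firing reaction, so the `b`-row of
`N v(x')` is a sum of nonnegative terms; it vanishes only if no firing reaction produces `b`,
which is closedness. Mass-maintenance is witnessed by `v x'` itself. -/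

def IsFluxFor {ι ρ : Type*} (re : ρ → Multiset ι × Multiset ι) (C : Set ι) (w : ρ → ℝ) : Prop :=
  ∀ r : ρ, 0 ≤ w r ∧ (0 < w r ↔ ∀ a ∈ (re r).1, a ∈ C)

theorem Admissible.isFluxFor {ι ρ : Type*} {re : ρ → Multiset ι × Multiset ι} {Φ : ℝ}
    {v : (ι → ℝ) → ρ → ℝ} (hv : Admissible re Φ v) (x : ι → ℝ) :
    IsFluxFor re {i | Φ < x i} (v x) :=
  hv x

theorem stoich_nonneg_of_notMem_reactants {ι ρ : Type*} [DecidableEq ι]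
    {re : ρ → Multiset ι × Multiset ι} {b : ι} {r : ρ} (hb : b ∉ (re r).1) :
    0 ≤ stoich re b r := by
  simp [stoich, Multiset.count_eq_zero.mpr hb]

namespace IsFluxFor

variable {ι ρ : Type*} [DecidableEq ι] {re : ρ → Multiset ι × Multiset ι} {C : Set ι}
  {w : ρ → ℝ}

theorem stoich_mul_nonneg_of_notMem (hw : IsFluxFor re C w) {b : ι} (hb : b ∉ C) (r : ρ) :
    0 ≤ stoich re b r * w r := by
  rcases (hw r).1.lt_or_eq with hpos | hzero
  · have hbr : b ∉ (re r).1 := fun hmem => hb ((hw r).2.mp hpos b hmem)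
    exact mul_nonneg (stoich_nonneg_of_notMem_reactants hbr) hpos.le
  · simp [← hzero]

theorem stoich_mul_pos_of_notMem (hw : IsFluxFor re C w) {b : ι} (hb : b ∉ C) {r : ρ}
    (hr : ∀ a ∈ (re r).1, a ∈ C) (hbr : b ∈ (re r).2) :
    0 < stoich re b r * w r := by
  have hcount : (re r).1.count b = 0 := Multiset.count_eq_zero.mpr fun hmem => hb (hr b hmem)
  have hstoich : 0 < stoich re b r := by
    simpa [stoich, hcount] using Multiset.count_pos.mpr hbr
  exact mul_pos hstoich ((hw r).2.mpr hr)

variable [Fintype ρ]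

theorem closed (hw : IsFluxFor re C w)
    (hout : ∀ b ∉ C, ∑ r : ρ, stoich re b r * w r ≤ 0) : Closed re C := by
  intro r hr b hbr
  by_contra hb
  have hsum : 0 < ∑ s : ρ, stoich re b s * w s :=
    Finset.sum_pos' (fun s _ => hw.stoich_mul_nonneg_of_notMem hb s)
      ⟨r, Finset.mem_univ r, hw.stoich_mul_pos_of_notMem hb hr hbr⟩
  exact (hout b hb).not_gt hsum

theorem massMaintaining (hw : IsFluxFor re C w)
    (hin : ∀ i ∈ C, 0 ≤ ∑ r : ρ, stoich re i r * w r) : MassMaintaining re C :=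
  ⟨w, fun r hr => (hw r).2.mpr hr,
    fun r hr => ((hw r).1.eq_or_lt).elim Eq.symm fun hpos => absurd ((hw r).2.mp hpos) hr, hin⟩

theorem organization (hw : IsFluxFor re C w)
    (hfix : ∀ i : ι, ∑ r : ρ, stoich re i r * w r = 0) : Organization re C :=
  ⟨hw.closed fun b _ => (hfix b).le, hw.massMaintaining fun i _ => (hfix i).ge⟩

end IsFluxFor

theorem stmt15_general {ι ρ : Type*} [Fintype ρ] [DecidableEq ι]
    (re : ρ → Multiset ι × Multiset ι) (Φ : ℝ)
    (v : (ι → ℝ) → ρ → ℝ) (hv : Admissible re Φ v)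
    (x' : ι → ℝ)
    (hfix : ∀ i : ι, ∑ r : ρ, stoich re i r * v x' r = 0) :
    Organization re {i : ι | Φ < x' i} :=
  (hv.isFluxFor x').organization hfix

/-- at a fixed point of the dynamics, the abstraction
`φ(x') = {i | x'_i > Φ}` is an organization (closed and mass-maintaining). -/
theorem stmt15 {ι ρ : Type*} [Fintype ι] [Fintype ρ] [DecidableEq ι]
    (re : ρ → Multiset ι × Multiset ι) (Φ : ℝ) (hΦ : 0 ≤ Φ)
    (v : (ι → ℝ) → ρ → ℝ) (hv : Admissible re Φ v)
    (x' : ι → ℝ) (hx : ∀ i : ι, 0 ≤ x' i)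
    (hfix : ∀ i : ι, ∑ r : ρ, stoich re i r * v x' r = 0)
    (hthr : ∀ i : ι, 0 < x' i → Φ < x' i) :
    Organization re {i : ι | Φ < x' i} :=
  stmt15_general re Φ v hv x' hfix
end

section
/- Consider a general reaction system with algebraic chemistry ⟨M,R⟩, stoichiometric matrix N, and an admissible flux function v with respect to a threshold Φ ≥ 0. If x' is a fixed point (N v(x') = 0, x' ≥ 0) and Φ is smaller than every positive coordinate of x', then the abstraction φ(x') = { i ∈ M : x'_i > Φ } is a semi-organization, i.e., it is closed and self-maintaining. -/
/-!
At a balanced flux, the net production `∑ r, N i r * w r` of each species vanishes. If the reactions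
carrying positive flux are exactly those whose reactants lie in `C`, then for a species outside `C`
every such reaction has nonnegative stoichiometry, strictly positive if it makes the species, so
balance forces `C` to be closed. Dually, a species of `C` that is consumed but never made by an
enabled reaction has negative net production, so balance forces `C` to be self-maintaining. At a
fixed point of an admissible flux, `C = φ(x')` is such a set.
-/

section Stoich

variable {ι ρ : Type*} [DecidableEq ι] {re : ρ → Multiset ι × Multiset ι} {i : ι} {r : ρ}

lemma stoich_pos_iff : 0 < stoich re i r ↔ (re r).1.count i < (re r).2.count i := by
  rw [stoich, sub_pos, Nat.cast_lt]

lemma stoich_neg_iff : stoich re i r < 0 ↔ (re r).2.count i < (re r).1.count i := by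
  rw [stoich, sub_neg, Nat.cast_lt]

lemma stoich_nonneg_of_notMem_reactants_s16 (h : i ∉ (re r).1) : 0 ≤ stoich re i r := by
  simp [stoich, Multiset.count_eq_zero_of_notMem h]

lemma stoich_pos_of_notMem_reactants_of_mem_products (h₁ : i ∉ (re r).1) (h₂ : i ∈ (re r).2) :
    0 < stoich re i r :=
  stoich_pos_iff.2 <| by rwa [Multiset.count_eq_zero_of_notMem h₁, Multiset.count_pos]

end Stoich

section BalancedFlux

variable {ι ρ : Type*} [Fintype ρ] [DecidableEq ι] {re : ρ → Multiset ι × Multiset ι}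
  {C : Set ι} {w : ρ → ℝ}

theorem closed_of_netProduction_nonpos
    (hw : ∀ r, 0 ≤ w r ∧ (0 < w r ↔ ∀ a ∈ (re r).1, a ∈ C))
    (hout : ∀ i ∉ C, ∑ r, stoich re i r * w r ≤ 0) : Closed re C := by
  intro r hr b hb
  by_contra hbC
  have hterm_nonneg : ∀ s, 0 ≤ stoich re b s * w s := by
    intro s
    rcases (hw s).1.lt_or_eq with hs | hs
    · exact mul_nonneg (stoich_nonneg_of_notMem_reactants_s16 fun hb' =>
        hbC ((hw s).2.1 hs b hb')) hs.le
    · simp [← hs]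
  have hterm_pos : 0 < stoich re b r * w r :=
    mul_pos (stoich_pos_of_notMem_reactants_of_mem_products (fun hb' => hbC (hr b hb')) hb)
      ((hw r).2.2 hr)
  exact (hout b hbC).not_gt <|
    Finset.sum_pos' (fun s _ => hterm_nonneg s) ⟨r, Finset.mem_univ r, hterm_pos⟩

theorem selfMaintaining_of_netProduction_nonneg
    (hw : ∀ r, 0 ≤ w r ∧ (0 < w r ↔ ∀ a ∈ (re r).1, a ∈ C))
    (hin : ∀ i ∈ C, 0 ≤ ∑ r, stoich re i r * w r) : SelfMaintaining re C := by
  rintro k hk ⟨r, hr, hused⟩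
  by_contra hnot_produced
  have hterm_nonpos : ∀ s, stoich re k s * w s ≤ 0 := by
    intro s
    rcases (hw s).1.lt_or_eq with hs | hs
    · refine mul_nonpos_of_nonpos_of_nonneg (not_lt.1 fun hpos => ?_) hs.le
      exact hnot_produced ⟨s, (hw s).2.1 hs, stoich_pos_iff.1 hpos⟩
    · simp [← hs]
  have hterm_neg : stoich re k r * w r < 0 :=
    mul_neg_of_neg_of_pos (stoich_neg_iff.2 hused) ((hw r).2.2 hr)
  exact (hin k hk).not_gt <|
    Finset.sum_neg' (fun s _ => hterm_nonpos s) ⟨r, Finset.mem_univ r, hterm_neg⟩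

theorem semiOrganization_of_balanced_flux
    (hw : ∀ r, 0 ≤ w r ∧ (0 < w r ↔ ∀ a ∈ (re r).1, a ∈ C))
    (hbal : ∀ i, ∑ r, stoich re i r * w r = 0) : SemiOrganization re C :=
  ⟨closed_of_netProduction_nonpos hw fun i _ => (hbal i).le,
    selfMaintaining_of_netProduction_nonneg hw fun i _ => (hbal i).ge⟩

end BalancedFlux

theorem stmt16_general {ι ρ : Type*} [Fintype ρ] [DecidableEq ι]
    (re : ρ → Multiset ι × Multiset ι) (Φ : ℝ)
    (v : (ι → ℝ) → ρ → ℝ) (hv : Admissible re Φ v)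
    (x' : ι → ℝ)
    (hfix : ∀ i : ι, ∑ r : ρ, stoich re i r * v x' r = 0) :
    SemiOrganization re {i : ι | Φ < x' i} :=
  semiOrganization_of_balanced_flux (hv x') hfix

/-- at a fixed point of the dynamics, the abstraction
`φ(x') = {i | x'_i > Φ}` is a semi-organization (closed and self-maintaining). -/
theorem stmt16 {ι ρ : Type*} [Fintype ι] [Fintype ρ] [DecidableEq ι]
    (re : ρ → Multiset ι × Multiset ι) (Φ : ℝ) (hΦ : 0 ≤ Φ)
    (v : (ι → ℝ) → ρ → ℝ) (hv : Admissible re Φ v)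
    (x' : ι → ℝ) (hx : ∀ i : ι, 0 ≤ x' i)
    (hfix : ∀ i : ι, ∑ r : ρ, stoich re i r * v x' r = 0)
    (hthr : ∀ i : ι, 0 < x' i → Φ < x' i) :
    SemiOrganization re {i : ι | Φ < x' i} :=
  stmt16_general re Φ v hv x' hfix
end
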